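/- Under the DINO model with true m×k Q-matrix Q and true parameters c, g ∈ [0,1]^m assumed known, suppose Q is complete, c ≇ g, and the attribute distribution p is diversified. For each sample size N let Q̃_N be any measurable choice of a minimizer of Q' ↦ V_{c,g}(Q') over all m×k binary matrices Q'. Then P(Q̃_N ∼ Q) → 1 as N → ∞. Moreover, there is a measurable choice of a column permutation of Q̃_N under which P(Q̃_N = Q) → 1, and for any such choice, any measurable choice p̂_N of a minimizer of p' ↦ |U_{c,g}(Q̃_N) p' − β_N| over probability vectors p' on {0,1}^k satisfies P(|p̂_N − p| > ε) → 0 for every ε > 0. -/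

import Mathlib

open MeasureTheory ProbabilityTheory Matrix Finset Filter

namespace QMatrix

variable {m k : ℕ}

/-- DINA capability indicator. -/
def xiDINA (Q : Fin m → Fin k → Bool) (i : Fin m) (A : Fin k → Bool) : ℝ :=
  if ∀ j, Q i j = true → A j = true then 1 else 0

/-- DINO capability indicator. -/
def xiDINO (Q : Fin m → Fin k → Bool) (i : Fin m) (A : Fin k → Bool) : ℝ :=
  if ∃ j, Q i j = true ∧ A j = true then 1 else 0

/-- Positive response probability under DINA. -/
noncomputable def piDINA (c g : Fin m → ℝ) (Q : Fin m → Fin k → Bool)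
    (i : Fin m) (A : Fin k → Bool) : ℝ :=
  (c i - g i) * xiDINA Q i A + g i

/-- Positive response probability under DINO. -/
noncomputable def piDINO (c g : Fin m → ℝ) (Q : Fin m → Fin k → Bool)
    (i : Fin m) (A : Fin k → Bool) : ℝ :=
  (c i - g i) * xiDINO Q i A + g i

/-- Entry of the saturated T-matrix for the row indexed by `S` and column indexed by `A`. -/
noncomputable def Tent (c g : Fin m → ℝ) (Q : Fin m → Fin k → Bool)
    (S : Finset (Fin m)) (A : Fin k → Bool) : ℝ :=
  ∏ i ∈ S, piDINA c g Q i A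

/-- Entry of the saturated U-matrix for the row indexed by `S` and column indexed by `A`. -/
noncomputable def Uent (c g : Fin m → ℝ) (Q : Fin m → Fin k → Bool)
    (S : Finset (Fin m)) (A : Fin k → Bool) : ℝ :=
  1 - ∏ i ∈ S, (1 - piDINO c g Q i A)

/-- The saturated T-matrix, rows indexed by nonempty subsets of items. -/
noncomputable def Tmat (c g : Fin m → ℝ) (Q : Fin m → Fin k → Bool) :
    Matrix {S : Finset (Fin m) // S.Nonempty} (Fin k → Bool) ℝ :=
  fun S A => Tent c g Q S.1 A

/-- The saturated U-matrix, rows indexed by nonempty subsets of items. -/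
noncomputable def Umat (c g : Fin m → ℝ) (Q : Fin m → Fin k → Bool) :
    Matrix {S : Finset (Fin m) // S.Nonempty} (Fin k → Bool) ℝ :=
  fun S A => Uent c g Q S.1 A

/-- The augmented T-matrix `T̃` (the row indexed by `∅` is the all-ones row). -/
noncomputable def Ttilde (c g : Fin m → ℝ) (Q : Fin m → Fin k → Bool) :
    Matrix (Finset (Fin m)) (Fin k → Bool) ℝ :=
  fun S A => Tent c g Q S A

/-- The augmented U-matrix `Ũ` (the row indexed by `∅` is the all-ones row). -/
noncomputable def Utilde (c g : Fin m → ℝ) (Q : Fin m → Fin k → Bool) :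
    Matrix (Finset (Fin m)) (Fin k → Bool) ℝ :=
  fun S A => if S.Nonempty then Uent c g Q S A else 1

/-- A Q-matrix is complete if each standard basis vector appears among its rows. -/
def Complete (Q : Fin m → Fin k → Bool) : Prop :=
  ∀ j : Fin k, ∃ i : Fin m, ∀ j' : Fin k, Q i j' = decide (j' = j)

/-- `QEquiv Q Q'` : `Q'` is obtained from `Q` by permuting columns (`Q ∼ Q'`). -/
def QEquiv (Q Q' : Fin m → Fin k → Bool) : Prop :=
  ∃ σ : Equiv.Perm (Fin k), ∀ i j, Q' i j = Q i (σ j)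

/-- `c ≇ g` : all coordinates differ. -/
def Ncong (c g : Fin m → ℝ) : Prop := ∀ i, c i ≠ g i

/-- Probability vector on attribute profiles. -/
def ProbVec (p : (Fin k → Bool) → ℝ) : Prop :=
  (∀ A, 0 ≤ p A) ∧ ∑ A, p A = 1

/-- Euclidean norm of a finitely indexed vector. -/
noncomputable def eNorm {ι : Type*} [Fintype ι] (v : ι → ℝ) : ℝ :=
  Real.sqrt (∑ i, v i ^ 2)

/-- pmf of one draw `(A, R)` under the DINA model. -/
noncomputable def dinaPMF (c g : Fin m → ℝ) (Q : Fin m → Fin k → Bool)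
    (p : (Fin k → Bool) → ℝ) (a : Fin k → Bool) (r : Fin m → Bool) : ℝ :=
  p a * ∏ i, (if r i then piDINA c g Q i a else 1 - piDINA c g Q i a)

/-- pmf of one draw `(A, R)` under the DINO model. -/
noncomputable def dinoPMF (c g : Fin m → ℝ) (Q : Fin m → Fin k → Bool)
    (p : (Fin k → Bool) → ℝ) (a : Fin k → Bool) (r : Fin m → Bool) : ℝ :=
  p a * ∏ i, (if r i then piDINO c g Q i a else 1 - piDINO c g Q i a)

/-- The empirical vector `α_N` computed from responses `R 0, …, R (N-1)`. -/
noncomputable def alphaVec (R : ℕ → (Fin m → Bool)) (N : ℕ) :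
    {S : Finset (Fin m) // S.Nonempty} → ℝ :=
  fun S => (∑ r ∈ Finset.range N, ∏ i ∈ S.1, (if R r i then (1:ℝ) else 0)) / N

/-- The empirical vector `β_N` computed from responses `R 0, …, R (N-1)`. -/
noncomputable def betaVec (R : ℕ → (Fin m → Bool)) (N : ℕ) :
    {S : Finset (Fin m) // S.Nonempty} → ℝ :=
  fun S => (∑ r ∈ Finset.range N, (if ∃ i ∈ S.1, R r i = true then (1:ℝ) else 0)) / N

/-- Objective `S_{c,g}(Q') = inf_{p'} |T_{c,g}(Q') p' - α|`. -/
noncomputable def Sobj (c g : Fin m → ℝ) (Q' : Fin m → Fin k → Bool)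
    (α : {S : Finset (Fin m) // S.Nonempty} → ℝ) : ℝ :=
  sInf {x | ∃ p', ProbVec p' ∧ x = eNorm (Tmat c g Q' *ᵥ p' - α)}

/-- Objective `V_{c,g}(Q') = inf_{p'} |U_{c,g}(Q') p' - β|`. -/
noncomputable def Vobj (c g : Fin m → ℝ) (Q' : Fin m → Fin k → Bool)
    (β : {S : Finset (Fin m) // S.Nonempty} → ℝ) : ℝ :=
  sInf {x | ∃ p', ProbVec p' ∧ x = eNorm (Umat c g Q' *ᵥ p' - β)}

/-!
Write `ξ(A) ∈ {0,1}^m` for the DINO capability pattern of `A`. Since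
`1 - π_i(A)` is `1 - c_i` or `1 - g_i` according to `ξ_i(A)`, the entries of `U_{c,g}(Q) p`
are the product moments `∑_y μ(y) ∏_{i ∈ S} (1 - c_i or 1 - g_i)` of the law `μ` of `ξ(A)`,
and because `c_i ≠ g_i` these moments determine `μ`. For a complete `Q` the map `A ↦ ξ(A)` is
injective, so `U_{c,g}(Q) p' = U_{c,g}(Q) p` forces `p' = p`; and if `p` is diversified,
every pattern `ξ(e_j)` of a unit profile must be realised under any `(Q', p')` with the same
moments, which pins down `Q'` up to a permutation of columns.

Compactness of the simplex turns this into a uniform gap `δ` between `U_{c,g}(Q) p` and all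
`U_{c,g}(Q') p'` with `Q' ≁ Q`, and the strong law gives `β_N → U_{c,g}(Q) p` almost surely.
Once `|β_N - U_{c,g}(Q) p| < δ / 2`, the minimiser of `V` can only lie in the class of `Q`.
-/

open Topology

lemma QEquiv.refl (Q : Fin m → Fin k → Bool) : QEquiv Q Q :=
  ⟨Equiv.refl _, fun _ _ => rfl⟩

lemma QEquiv.symm {Q Q' : Fin m → Fin k → Bool} (h : QEquiv Q Q') : QEquiv Q' Q := by
  obtain ⟨σ, hσ⟩ := h
  exact ⟨σ.symm, fun i j => by rw [hσ, Equiv.apply_symm_apply]⟩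

section Identifiability

lemma exists_ite_eq_eq_sum_mul_prod {ι : Type*} [Fintype ι] [DecidableEq ι] {a b : ι → ℝ}
    (hab : ∀ i, a i ≠ b i) (z : ι → Bool) :
    ∃ w : Finset ι → ℝ, ∀ y : ι → Bool,
      (if y = z then (1 : ℝ) else 0) = ∑ S, w S * ∏ i ∈ S, (if y i then a i else b i) := by
  set t : ι → Bool → ℝ := fun i b' => if b' then a i else b i
  -- `[y i = z i]` is an affine function of `t i (y i)`, since `a i ≠ b i`.
  set u : ι → ℝ := fun i => (if z i then 1 else -1) / (a i - b i)
  set v : ι → ℝ := fun i => (if z i then -b i else a i) / (a i - b i)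
  refine ⟨fun S => (∏ i ∈ S, u i) * ∏ i ∈ univ \ S, v i, fun y => ?_⟩
  have hcoord : ∀ i, u i * t i (y i) + v i = if y i = z i then 1 else 0 := by
    intro i
    have := sub_ne_zero.mpr (hab i)
    cases y i <;> cases hz : z i <;> simp [u, v, t, hz] <;> field_simp <;> ring
  calc (if y = z then (1 : ℝ) else 0)
      = ∏ i, (u i * t i (y i) + v i) := by
        simp only [hcoord, prod_boole, mem_univ, true_implies, funext_iff]
    _ = ∑ S, (∏ i ∈ S, u i) * (∏ i ∈ univ \ S, v i) * ∏ i ∈ S, t i (y i) := by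
        rw [prod_add, powerset_univ]
        refine sum_congr rfl fun S _ => ?_
        rw [prod_mul_distrib]
        ring

lemma sum_fiber_eq_of_sum_mul_prod_eq {α ι : Type*} [Fintype α] [Fintype ι] [DecidableEq ι]
    {a b : ι → ℝ} (hab : ∀ i, a i ≠ b i) {f g : α → ι → Bool} {μ ν : α → ℝ}
    (h : ∀ S : Finset ι, ∑ x, μ x * ∏ i ∈ S, (if f x i then a i else b i) =
      ∑ x, ν x * ∏ i ∈ S, (if g x i then a i else b i))
    (z : ι → Bool) :
    ∑ x with f x = z, μ x = ∑ x with g x = z, ν x := by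
  obtain ⟨w, hw⟩ := exists_ite_eq_eq_sum_mul_prod hab z
  have key : ∀ (F : α → ι → Bool) (q : α → ℝ), ∑ x with F x = z, q x =
      ∑ S, w S * ∑ x, q x * ∏ i ∈ S, (if F x i then a i else b i) := by
    intro F q
    calc ∑ x with F x = z, q x = ∑ x, q x * (if F x = z then 1 else 0) := by
          simp only [sum_filter, mul_boole]
      _ = ∑ S, w S * ∑ x, q x * ∏ i ∈ S, (if F x i then a i else b i) := by
          simp only [hw, mul_sum]
          rw [sum_comm]
          exact sum_congr rfl fun S _ => sum_congr rfl fun x _ => by ring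
  simp only [key, h]

/-- `capPattern Q A i = true` iff `ξ^i_DINO(A, Q) = 1`. -/
def capPattern (Q : Fin m → Fin k → Bool) (A : Fin k → Bool) : Fin m → Bool :=
  fun i => decide (∃ j, Q i j = true ∧ A j = true)

lemma one_sub_piDINO (c g : Fin m → ℝ) (Q : Fin m → Fin k → Bool) (i : Fin m)
    (A : Fin k → Bool) :
    1 - piDINO c g Q i A = if capPattern Q A i then 1 - c i else 1 - g i := by
  by_cases h : ∃ j, Q i j = true ∧ A j = true <;> simp [piDINO, xiDINO, capPattern, h]

lemma Umat_mulVec_apply (c g : Fin m → ℝ) (Q : Fin m → Fin k → Bool) {q : (Fin k → Bool) → ℝ}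
    (hq : ∑ A, q A = 1) (S : {S : Finset (Fin m) // S.Nonempty}) :
    (Umat c g Q *ᵥ q) S = 1 - ∑ A, q A * ∏ i ∈ S.1, (1 - piDINO c g Q i A) := by
  simp only [Umat, Uent, mulVec, dotProduct]
  rw [eq_sub_iff_add_eq, ← sum_add_distrib]
  exact (sum_congr rfl fun A _ => by ring).trans hq

lemma sum_fiber_capPattern_eq {c g : Fin m → ℝ} (hcg : Ncong c g) {Q Q' : Fin m → Fin k → Bool}
    {p p' : (Fin k → Bool) → ℝ} (hp : ∑ A, p A = 1) (hp' : ∑ A, p' A = 1)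
    (hU : Umat c g Q' *ᵥ p' = Umat c g Q *ᵥ p) (z : Fin m → Bool) :
    ∑ A with capPattern Q' A = z, p' A = ∑ A with capPattern Q A = z, p A := by
  refine sum_fiber_eq_of_sum_mul_prod_eq (a := fun i => 1 - c i) (b := fun i => 1 - g i)
    (fun i h => hcg i (sub_right_injective h)) (fun S => ?_) z
  simp only [← one_sub_piDINO]
  rcases S.eq_empty_or_nonempty with rfl | hS
  · simp [hp, hp']
  · have hS := congrFun hU ⟨S, hS⟩
    rw [Umat_mulVec_apply c g Q' hp', Umat_mulVec_apply c g Q hp] at hS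
    linarith

lemma capPattern_unit (Q : Fin m → Fin k → Bool) (i : Fin m) (j : Fin k) :
    capPattern Q (fun j' => decide (j' = j)) i = Q i j := by
  simp [capPattern]

lemma capPattern_injective {Q : Fin m → Fin k → Bool} (hQ : Complete Q) :
    Function.Injective (capPattern Q) := by
  intro A A' h
  funext j
  obtain ⟨i, hi⟩ := hQ j
  simpa [capPattern, hi] using congrFun h i

lemma qequiv_of_forall_exists_capPattern_eq {Q Q' : Fin m → Fin k → Bool} (hQ : Complete Q)
    (h : ∀ j, ∃ A, capPattern Q' A = capPattern Q (fun j' => decide (j' = j))) :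
    QEquiv Q Q' := by
  choose e he using hQ
  choose B hB using h
  -- Row `e j'` of `Q` is the unit vector at `j'`, so `B j` meets row `e j'` of `Q'` iff `j' = j`.
  have hmeet : ∀ j j', (∃ x, Q' (e j') x = true ∧ B j x = true) ↔ j' = j := by
    intro j j'
    simpa [capPattern_unit, capPattern, he] using congrFun (hB j) (e j')
  choose τ hτ using fun j => (hmeet j j).2 rfl
  have hτ_inj : Function.Injective τ := fun j j' hjj' =>
    (hmeet j' j).1 ⟨τ j', hjj' ▸ (hτ j).1, (hτ j').2⟩
  have hτ_bij := hτ_inj.bijective_of_finite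
  have hB_sub : ∀ j x, B j x = true → x = τ j := by
    intro j x hx
    obtain ⟨j', rfl⟩ := hτ_bij.2 x
    rw [(hmeet j j').1 ⟨τ j', (hτ j').1, hx⟩]
  have hcol : ∀ i j, Q' i (τ j) = Q i j := by
    intro i j
    rw [← capPattern_unit Q, ← hB j]
    change Q' i (τ j) = decide (∃ x, Q' i x = true ∧ B j x = true)
    rw [Bool.eq_iff_iff, decide_eq_true_iff]
    exact ⟨fun hQ' => ⟨τ j, hQ', (hτ j).2⟩, fun ⟨x, hx, hBx⟩ => hB_sub j x hBx ▸ hx⟩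
  refine ⟨(Equiv.ofBijective τ hτ_bij).symm, fun i x => ?_⟩
  rw [← hcol, Equiv.ofBijective_apply_symm_apply τ hτ_bij x]

theorem qequiv_of_Umat_mulVec_eq {c g : Fin m → ℝ} (hcg : Ncong c g)
    {Q Q' : Fin m → Fin k → Bool} (hQ : Complete Q) {p p' : (Fin k → Bool) → ℝ}
    (hp : ∑ A, p A = 1) (hdiv : ∀ A, 0 < p A) (hp' : ∑ A, p' A = 1)
    (hU : Umat c g Q' *ᵥ p' = Umat c g Q *ᵥ p) : QEquiv Q Q' := by
  refine qequiv_of_forall_exists_capPattern_eq hQ fun j => ?_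
  have hpos : 0 < ∑ A with capPattern Q A = capPattern Q (fun j' => decide (j' = j)), p A :=
    sum_pos (fun A _ => hdiv A) ⟨_, mem_filter.2 ⟨mem_univ _, rfl⟩⟩
  rw [← sum_fiber_capPattern_eq hcg hp hp' hU] at hpos
  obtain ⟨A, hA, -⟩ := exists_ne_zero_of_sum_ne_zero hpos.ne'
  exact ⟨A, (mem_filter.1 hA).2⟩

theorem eq_of_Umat_mulVec_eq {c g : Fin m → ℝ} (hcg : Ncong c g)
    {Q : Fin m → Fin k → Bool} (hQ : Complete Q) {p p' : (Fin k → Bool) → ℝ}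
    (hp : ∑ A, p A = 1) (hp' : ∑ A, p' A = 1)
    (hU : Umat c g Q *ᵥ p' = Umat c g Q *ᵥ p) : p' = p := by
  funext A
  simpa [(capPattern_injective hQ).eq_iff, filter_eq'] using sum_fiber_capPattern_eq hcg hp hp' hU
    (capPattern Q A)

end Identifiability

section Separation

variable {ι : Type*} [Fintype ι]

lemma eNorm_nonneg (v : ι → ℝ) : 0 ≤ eNorm v :=
  Real.sqrt_nonneg _

@[simp]
lemma eNorm_zero : eNorm (0 : ι → ℝ) = 0 := by
  simp [eNorm]

lemma eNorm_sub_eq_dist (v w : ι → ℝ) :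
    eNorm (v - w) = dist (WithLp.toLp 2 v) (WithLp.toLp 2 w) := by
  simp [eNorm, EuclideanSpace.dist_eq, Real.dist_eq, sq_abs]

lemma eNorm_sub_le_add (u v w : ι → ℝ) : eNorm (u - w) ≤ eNorm (u - v) + eNorm (w - v) := by
  simp only [eNorm_sub_eq_dist]
  exact dist_triangle_right _ _ _

lemma eNorm_sub_pos {v w : ι → ℝ} (h : v ≠ w) : 0 < eNorm (v - w) := by
  rw [eNorm_sub_eq_dist]
  exact dist_pos.2 fun h' => h (WithLp.toLp_injective 2 h')

lemma continuous_eNorm : Continuous (eNorm (ι := ι)) := by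
  unfold eNorm
  fun_prop

lemma _root_.IsCompact.eventually_forall_le {X : Type*} [TopologicalSpace X] {K : Set X}
    (hK : IsCompact K) {f : X → ℝ} (hf : ContinuousOn f K) (hpos : ∀ x ∈ K, 0 < f x) :
    ∀ᶠ δ in 𝓝[>] (0 : ℝ), ∀ x ∈ K, δ ≤ f x := by
  rcases K.eq_empty_or_nonempty with rfl | hne
  · simp
  obtain ⟨x₀, hx₀, hmin⟩ := hK.exists_isMinOn hne hf
  filter_upwards [Ioc_mem_nhdsGT (hpos x₀ hx₀)] with δ hδ x hx using hδ.2.trans (hmin hx)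

lemma isCompact_setOf_probVec : IsCompact {q : (Fin k → Bool) → ℝ | ProbVec q} :=
  isCompact_stdSimplex ℝ _

lemma continuous_eNorm_mulVec_sub {κ : Type*} [Fintype κ] (M : Matrix ι κ ℝ) (v : ι → ℝ) :
    Continuous fun q : κ → ℝ => eNorm (M *ᵥ q - v) :=
  continuous_eNorm.comp ((Continuous.matrix_mulVec continuous_const continuous_id).sub
    continuous_const)

theorem eventually_le_eNorm_of_not_qequiv {c g : Fin m → ℝ} (hcg : Ncong c g)
    {Q : Fin m → Fin k → Bool} (hQ : Complete Q) {p : (Fin k → Bool) → ℝ}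
    (hp : ∑ A, p A = 1) (hdiv : ∀ A, 0 < p A) :
    ∀ᶠ δ in 𝓝[>] (0 : ℝ), ∀ Q', ¬ QEquiv Q Q' → ∀ p', ProbVec p' →
      δ ≤ eNorm (Umat c g Q' *ᵥ p' - Umat c g Q *ᵥ p) := by
  refine eventually_all.2 fun Q' => ?_
  by_cases hQQ' : QEquiv Q Q'
  · simp [hQQ']
  refine (isCompact_setOf_probVec.eventually_forall_le
    (continuous_eNorm_mulVec_sub _ _).continuousOn fun p' hp' => eNorm_sub_pos ?_).mono
    fun δ hδ _ => hδ
  exact fun hU => hQQ' (qequiv_of_Umat_mulVec_eq hcg hQ hp hdiv hp'.2 hU)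

theorem eventually_le_eNorm_of_le_eNorm_sub {c g : Fin m → ℝ} (hcg : Ncong c g)
    {Q : Fin m → Fin k → Bool} (hQ : Complete Q) {p : (Fin k → Bool) → ℝ}
    (hp : ∑ A, p A = 1) {ε : ℝ} (hε : 0 < ε) :
    ∀ᶠ η in 𝓝[>] (0 : ℝ), ∀ p', ProbVec p' → ε ≤ eNorm (p' - p) →
      η ≤ eNorm (Umat c g Q *ᵥ p' - Umat c g Q *ᵥ p) := by
  have hK : IsCompact {q | ProbVec q ∧ ε ≤ eNorm (q - p)} :=
    isCompact_setOf_probVec.inter_right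
      (isClosed_le continuous_const (continuous_eNorm.comp (continuous_id.sub continuous_const)))
  refine (hK.eventually_forall_le (continuous_eNorm_mulVec_sub _ _).continuousOn
    fun p' hp' => eNorm_sub_pos fun hU => ?_).mono fun η hη p' hp' hεp' => hη p' ⟨hp', hεp'⟩
  have := hp'.2
  rw [eq_of_Umat_mulVec_eq hcg hQ hp hp'.1.2 hU, sub_self, eNorm_zero] at this
  linarith

lemma Vobj_le_eNorm (c g : Fin m → ℝ) (Q' : Fin m → Fin k → Bool)
    (β : {S : Finset (Fin m) // S.Nonempty} → ℝ) {p₀ : (Fin k → Bool) → ℝ} (hp₀ : ProbVec p₀) :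
    Vobj c g Q' β ≤ eNorm (Umat c g Q' *ᵥ p₀ - β) :=
  csInf_le ⟨0, by rintro x ⟨p', -, rfl⟩; exact eNorm_nonneg _⟩ ⟨p₀, hp₀, rfl⟩

lemma le_Vobj (c g : Fin m → ℝ) (Q' : Fin m → Fin k → Bool)
    (β : {S : Finset (Fin m) // S.Nonempty} → ℝ) {p₀ : (Fin k → Bool) → ℝ} (hp₀ : ProbVec p₀)
    {x : ℝ} (h : ∀ p', ProbVec p' → x ≤ eNorm (Umat c g Q' *ᵥ p' - β)) :
    x ≤ Vobj c g Q' β :=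
  le_csInf ⟨_, p₀, hp₀, rfl⟩ fun _ ⟨p', hp', hx⟩ => hx ▸ h p' hp'

lemma half_le_eNorm_of_not_qequiv {c g : Fin m → ℝ} {Q Q₀ : Fin m → Fin k → Bool}
    {p : (Fin k → Bool) → ℝ} (hp : ProbVec p) {δ : ℝ}
    (hsep : ∀ Q', ¬ QEquiv Q Q' → ∀ p', ProbVec p' →
      δ ≤ eNorm (Umat c g Q' *ᵥ p' - Umat c g Q *ᵥ p))
    {β : {S : Finset (Fin m) // S.Nonempty} → ℝ} (hmin : Vobj c g Q₀ β ≤ Vobj c g Q β)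
    (hQ₀ : ¬ QEquiv Q Q₀) :
    δ / 2 ≤ eNorm (Umat c g Q *ᵥ p - β) := by
  have hV : δ - eNorm (Umat c g Q *ᵥ p - β) ≤ Vobj c g Q₀ β :=
    le_Vobj c g Q₀ β hp fun p' hp' => by
      linarith [hsep Q₀ hQ₀ p' hp', eNorm_sub_le_add (Umat c g Q₀ *ᵥ p') β (Umat c g Q *ᵥ p)]
  linarith [Vobj_le_eNorm c g Q β hp]

lemma half_eNorm_mulVec_sub_le {ι κ : Type*} [Fintype ι] [Fintype κ] {M : Matrix ι κ ℝ}
    {β : ι → ℝ} {p p' : κ → ℝ} (hmin : eNorm (M *ᵥ p' - β) ≤ eNorm (M *ᵥ p - β)) :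
    eNorm (M *ᵥ p' - M *ᵥ p) / 2 ≤ eNorm (M *ᵥ p - β) := by
  linarith [eNorm_sub_le_add (M *ᵥ p') β (M *ᵥ p)]

end Separation

section LawOfLargeNumbers

lemma sum_prod_mul_ite_forall_eq {ι : Type*} [Fintype ι] [DecidableEq ι] (w : ι → Bool → ℝ)
    (hw : ∀ i, w i true + w i false = 1) (S : Finset ι) :
    ∑ r : ι → Bool, (∏ i, w i (r i)) * (if ∀ i ∈ S, r i = false then 1 else 0) =
      ∏ i ∈ S, w i false := by
  set h : ι → Bool → ℝ := fun i b => if i ∈ S ∧ b = true then 0 else w i b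
  have hrow : ∀ r : ι → Bool,
      (∏ i, w i (r i)) * (if ∀ i ∈ S, r i = false then 1 else 0) = ∏ i, h i (r i) := by
    intro r
    by_cases hr : ∀ i ∈ S, r i = false
    · rw [if_pos hr, mul_one]
      refine prod_congr rfl fun i _ => ?_
      by_cases hi : i ∈ S <;> simp [h, hi, hr]
    · push Not at hr
      obtain ⟨i, hi, hri⟩ := hr
      rw [if_neg fun hall => hri (hall i hi), mul_zero]
      exact (prod_eq_zero (mem_univ i) (by simp [h, hi, hri])).symm
  rw [sum_congr rfl fun r _ => hrow r, ← Fintype.prod_sum, ← Fintype.prod_ite_mem S]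
  refine prod_congr rfl fun i _ => ?_
  by_cases hi : i ∈ S <;> simp [h, hi, hw]

lemma sum_prod_mul_ite_exists_eq {ι : Type*} [Fintype ι] [DecidableEq ι] (w : ι → Bool → ℝ)
    (hw : ∀ i, w i true + w i false = 1) (S : Finset ι) :
    ∑ r : ι → Bool, (∏ i, w i (r i)) * (if ∃ i ∈ S, r i = true then 1 else 0) =
      1 - ∏ i ∈ S, w i false := by
  have hind : ∀ r : ι → Bool, (if ∃ i ∈ S, r i = true then (1 : ℝ) else 0) =
      1 - if ∀ i ∈ S, r i = false then 1 else 0 := by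
    intro r
    by_cases hr : ∃ i ∈ S, r i = true
    · obtain ⟨i, hi, hri⟩ := hr
      rw [if_pos ⟨i, hi, hri⟩, if_neg fun hall => by simp [hall i hi] at hri, sub_zero]
    · push Not at hr
      rw [if_neg fun ⟨i, hi, hri⟩ => hr i hi hri, if_pos fun i hi => by simpa using hr i hi,
        sub_self]
  simp only [hind, mul_sub, mul_one, sum_sub_distrib, sum_prod_mul_ite_forall_eq w hw S]
  simpa using sum_prod_mul_ite_forall_eq w hw ∅

lemma dinoPMF_nonneg {c g : Fin m → ℝ} (hc : ∀ i, c i ∈ Set.Icc (0:ℝ) 1)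
    (hg : ∀ i, g i ∈ Set.Icc (0:ℝ) 1) (Q : Fin m → Fin k → Bool) {p : (Fin k → Bool) → ℝ}
    (hp : ∀ A, 0 ≤ p A) (a : Fin k → Bool) (r : Fin m → Bool) :
    0 ≤ dinoPMF c g Q p a r := by
  refine mul_nonneg (hp a) (prod_nonneg fun i _ => ?_)
  have hπ : piDINO c g Q i a ∈ Set.Icc (0:ℝ) 1 := by
    unfold piDINO xiDINO
    split_ifs
    · simpa using hc i
    · simpa using hg i
  split_ifs <;> linarith [hπ.1, hπ.2]

lemma sum_dinoPMF_mul_ite_exists (c g : Fin m → ℝ) (Q : Fin m → Fin k → Bool)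
    (p : (Fin k → Bool) → ℝ) (S : {S : Finset (Fin m) // S.Nonempty}) :
    ∑ x : (Fin k → Bool) × (Fin m → Bool),
        dinoPMF c g Q p x.1 x.2 * (if ∃ i ∈ S.1, x.2 i = true then 1 else 0) =
      (Umat c g Q *ᵥ p) S := by
  rw [Fintype.sum_prod_type]
  refine sum_congr rfl fun a _ => ?_
  have hresp := sum_prod_mul_ite_exists_eq
    (fun i (b : Bool) => if b then piDINO c g Q i a else 1 - piDINO c g Q i a)
    (fun i => by simp) S.1
  simp only [Bool.false_eq_true, ↓reduceIte] at hresp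
  calc ∑ r, dinoPMF c g Q p a r * (if ∃ i ∈ S.1, r i = true then 1 else 0)
      = p a * ∑ r : Fin m → Bool, (∏ i, if r i then piDINO c g Q i a else 1 - piDINO c g Q i a) *
          (if ∃ i ∈ S.1, r i = true then 1 else 0) := by
        rw [mul_sum]
        exact sum_congr rfl fun r _ => by rw [dinoPMF, mul_assoc]
    _ = p a * (1 - ∏ i ∈ S.1, (1 - piDINO c g Q i a)) := by
        congr 1
        convert hresp
    _ = Umat c g Q S a * p a := mul_comm _ _

lemma integral_comp_eq_sum_mul {Ω α : Type*} [MeasurableSpace Ω] [Fintype α] [MeasurableSpace α]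
    [MeasurableSingletonClass α] {P : Measure Ω} [IsFiniteMeasure P] {X : Ω → α}
    (hX : Measurable X) {f : α → ℝ} (hf : ∀ x, 0 ≤ f x)
    (hlaw : ∀ x, P (X ⁻¹' {x}) = ENNReal.ofReal (f x)) (φ : α → ℝ) :
    ∫ ω, φ (X ω) ∂P = ∑ x, f x * φ x := by
  rw [← integral_map hX.aemeasurable (measurable_of_finite φ).aestronglyMeasurable,
    integral_fintype Integrable.of_finite]
  simp [Measure.real, Measure.map_apply hX (measurableSet_singleton _), hlaw,
    ENNReal.toReal_ofReal (hf _)]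

lemma measurable_betaVec {Ω : Type*} [MeasurableSpace Ω] {R : ℕ → Ω → (Fin m → Bool)}
    (hR : ∀ n, Measurable (R n)) (N : ℕ) :
    Measurable fun ω => betaVec (fun n => R n ω) N :=
  measurable_pi_lambda _ fun S => Measurable.div_const (Finset.measurable_sum _ fun n _ =>
    (measurable_of_countable fun r : Fin m → Bool =>
      if ∃ i ∈ S.1, r i = true then (1 : ℝ) else 0).comp (hR n)) _

theorem ae_tendsto_betaVec {Ω : Type*} [MeasurableSpace Ω] {P : Measure Ω}
    [IsProbabilityMeasure P] {Q : Fin m → Fin k → Bool} {c g : Fin m → ℝ}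
    {p : (Fin k → Bool) → ℝ} (hc : ∀ i, c i ∈ Set.Icc (0:ℝ) 1) (hg : ∀ i, g i ∈ Set.Icc (0:ℝ) 1)
    (hp : ∀ A, 0 ≤ p A) {A : ℕ → Ω → (Fin k → Bool)} {R : ℕ → Ω → (Fin m → Bool)}
    (hmeas : ∀ n, Measurable (fun ω => (A n ω, R n ω)))
    (hindep : iIndepFun (fun n ω => (A n ω, R n ω)) P)
    (hdist : ∀ (n : ℕ) (a : Fin k → Bool) (r : Fin m → Bool),
      P {ω | A n ω = a ∧ R n ω = r} = ENNReal.ofReal (dinoPMF c g Q p a r)) :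
    ∀ᵐ ω ∂P, Tendsto (fun N => betaVec (fun n => R n ω) N) atTop (𝓝 (Umat c g Q *ᵥ p)) := by
  simp only [tendsto_pi_nhds]
  refine ae_all_iff.2 fun S => ?_
  set X : ℕ → Ω → (Fin k → Bool) × (Fin m → Bool) := fun n ω => (A n ω, R n ω)
  set φ : (Fin k → Bool) × (Fin m → Bool) → ℝ := fun x => if ∃ i ∈ S.1, x.2 i = true then 1 else 0
  have hφ : Measurable φ := measurable_of_countable φ
  have hlaw : ∀ n x, P (X n ⁻¹' {x}) = ENNReal.ofReal (dinoPMF c g Q p x.1 x.2) := by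
    intro n x
    rw [← hdist n x.1 x.2]
    congr 1
    ext ω
    simp [X, Prod.ext_iff]
  have hident : ∀ n, IdentDistrib (φ ∘ X n) (φ ∘ X 0) P P := fun n =>
    IdentDistrib.comp ⟨(hmeas n).aemeasurable, (hmeas 0).aemeasurable,
      Measure.ext_iff_singleton.2 fun x => by
        rw [Measure.map_apply (hmeas n) (measurableSet_singleton x),
          Measure.map_apply (hmeas 0) (measurableSet_singleton x), hlaw, hlaw]⟩ hφ
  have hmean : P[φ ∘ X 0] = (Umat c g Q *ᵥ p) S :=
    (integral_comp_eq_sum_mul (hmeas 0) (fun x => dinoPMF_nonneg hc hg Q hp x.1 x.2) (hlaw 0)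
      φ).trans (sum_dinoPMF_mul_ite_exists c g Q p S)
  have hslln := strong_law_ae_real (fun n => φ ∘ X n)
    (Integrable.of_finite.comp_measurable (hmeas 0))
    (fun i j hij => (hindep.comp (fun _ => φ) fun _ => hφ).indepFun hij) hident
  rwa [hmean] at hslln

theorem tendsto_measure_le_eNorm_sub_betaVec {Ω : Type*} [MeasurableSpace Ω] {P : Measure Ω}
    [IsProbabilityMeasure P] {R : ℕ → Ω → (Fin m → Bool)} (hR : ∀ n, Measurable (R n))
    {b : {S : Finset (Fin m) // S.Nonempty} → ℝ}
    (hβ : ∀ᵐ ω ∂P, Tendsto (fun N => betaVec (fun n => R n ω) N) atTop (𝓝 b))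
    {r : ℝ} (hr : 0 < r) :
    Tendsto (fun N => P {ω | r ≤ eNorm (b - betaVec (fun n => R n ω) N)}) atTop (𝓝 0) := by
  have hae : ∀ᵐ ω ∂P,
      Tendsto (fun N => eNorm (b - betaVec (fun n => R n ω) N)) atTop (𝓝 0) := by
    filter_upwards [hβ] with ω hω
    have h := (continuous_eNorm.tendsto (b - b)).comp (tendsto_const_nhds.sub hω)
    rwa [sub_self, eNorm_zero] at h
  have hmeas : ∀ N, AEStronglyMeasurable (fun ω => eNorm (b - betaVec (fun n => R n ω) N)) P :=
    fun N => (continuous_eNorm.measurable.comp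
      (measurable_const.sub (measurable_betaVec hR N))).aestronglyMeasurable
  simpa [abs_of_nonneg (eNorm_nonneg _)] using
    tendstoInMeasure_iff_dist.1 (tendstoInMeasure_of_tendsto_ae hmeas hae) r hr

end LawOfLargeNumbers

section Consistency

lemma tendsto_measure_of_tendsto_measure_compl {Ω ι : Type*} [MeasurableSpace Ω]
    {P : Measure Ω} [IsProbabilityMeasure P] {l : Filter ι} {s : ι → Set Ω}
    (h : Tendsto (fun i => P (s i)ᶜ) l (𝓝 0)) : Tendsto (fun i => P (s i)) l (𝓝 1) := by
  have hlow : Tendsto (fun i => 1 - P (s i)ᶜ) l (𝓝 1) := by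
    simpa using ENNReal.Tendsto.sub tendsto_const_nhds h (Or.inl ENNReal.one_ne_top)
  refine tendsto_of_tendsto_of_tendsto_of_le_of_le hlow tendsto_const_nhds (fun i => ?_)
    fun _ => prob_le_one
  simpa [tsub_le_iff_right] using measure_univ_le_add_compl (μ := P) (s i)

lemma tendsto_measure_compl_of_tendsto_measure {Ω ι : Type*} [MeasurableSpace Ω]
    {P : Measure Ω} [IsProbabilityMeasure P] {l : Filter ι} {s : ι → Set Ω}
    (hs : ∀ i, MeasurableSet (s i)) (h : Tendsto (fun i => P (s i)) l (𝓝 1)) :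
    Tendsto (fun i => P (s i)ᶜ) l (𝓝 0) := by
  simpa [prob_compl_eq_one_sub (hs _)] using
    ENNReal.Tendsto.sub tendsto_const_nhds h (Or.inl ENNReal.one_ne_top)

lemma tendsto_measure_of_subset {Ω ι : Type*} [MeasurableSpace Ω] {P : Measure Ω}
    {l : Filter ι} {s t : ι → Set Ω} (hst : ∀ i, s i ⊆ t i)
    (ht : Tendsto (fun i => P (t i)) l (𝓝 0)) : Tendsto (fun i => P (s i)) l (𝓝 0) :=
  tendsto_of_tendsto_of_tendsto_of_le_of_le tendsto_const_nhds ht (fun _ => zero_le)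
    fun i => measure_mono (hst i)

variable {Ω : Type*} [MeasurableSpace Ω] {P : Measure Ω} [IsProbabilityMeasure P]
  {c g : Fin m → ℝ} {Q : Fin m → Fin k → Bool} {p : (Fin k → Bool) → ℝ}
  {β : ℕ → Ω → {S : Finset (Fin m) // S.Nonempty} → ℝ}

theorem tendsto_measure_qequiv (hcg : Ncong c g) (hQ : Complete Q) (hp : ProbVec p)
    (hdiv : ∀ A, 0 < p A)
    (hβ : ∀ r > 0, Tendsto (fun N => P {ω | r ≤ eNorm (Umat c g Q *ᵥ p - β N ω)}) atTop (𝓝 0))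
    {Qhat : ℕ → Ω → (Fin m → Fin k → Bool)}
    (hQhat : ∀ N ω (Q' : Fin m → Fin k → Bool),
      Vobj c g (Qhat N ω) (β N ω) ≤ Vobj c g Q' (β N ω)) :
    Tendsto (fun N => P {ω | QEquiv Q (Qhat N ω)}) atTop (𝓝 1) := by
  obtain ⟨δ, hsep, hδ⟩ :=
    ((eventually_le_eNorm_of_not_qequiv hcg hQ hp.2 hdiv).and self_mem_nhdsWithin).exists
  exact tendsto_measure_of_tendsto_measure_compl <| tendsto_measure_of_subset
    (fun N ω => half_le_eNorm_of_not_qequiv hp hsep (hQhat N ω Q)) (hβ _ (half_pos hδ))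

theorem tendsto_measure_lt_eNorm_sub (hcg : Ncong c g) (hQ : Complete Q) (hp : ProbVec p)
    (hβ : ∀ r > 0, Tendsto (fun N => P {ω | r ≤ eNorm (Umat c g Q *ᵥ p - β N ω)}) atTop (𝓝 0))
    {Qbar : ℕ → Ω → (Fin m → Fin k → Bool)} (hQbarMeas : ∀ N, Measurable (Qbar N))
    (hQbar : Tendsto (fun N => P {ω | Qbar N ω = Q}) atTop (𝓝 1))
    {phat : ℕ → Ω → (Fin k → Bool) → ℝ}
    (hphat : ∀ N ω, ProbVec (phat N ω) ∧ ∀ p', ProbVec p' →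
      eNorm (Umat c g (Qbar N ω) *ᵥ phat N ω - β N ω) ≤ eNorm (Umat c g (Qbar N ω) *ᵥ p' - β N ω))
    {ε : ℝ} (hε : 0 < ε) :
    Tendsto (fun N => P {ω | ε < eNorm (phat N ω - p)}) atTop (𝓝 0) := by
  obtain ⟨η, hsep, hη⟩ :=
    ((eventually_le_eNorm_of_le_eNorm_sub hcg hQ hp.2 hε).and self_mem_nhdsWithin).exists
  have hbad := (tendsto_measure_compl_of_tendsto_measure
    (fun N => hQbarMeas N (measurableSet_singleton Q)) hQbar).add (hβ (η / 2) (half_pos hη))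
  rw [add_zero] at hbad
  refine tendsto_of_tendsto_of_tendsto_of_le_of_le tendsto_const_nhds hbad (fun _ => zero_le)
    fun N => (measure_mono fun ω hω => ?_).trans (measure_union_le _ _)
  by_cases hQω : Qbar N ω = Q
  · obtain ⟨hprob, hmin⟩ := hphat N ω
    rw [hQω] at hmin
    have := hsep _ hprob (le_of_lt hω)
    have := half_eNorm_mulVec_sub_le (hmin p hp)
    exact Or.inr (show η / 2 ≤ _ by linarith)
  · exact Or.inl hQω

end Consistency

/-- Theorem 3 (DINO, `c` and `g` known): consistency of the Q-matrix estimator and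
of the attribute-distribution estimator. -/
theorem dino_known_cg_consistency
    {Ω : Type*} [MeasurableSpace Ω] (P : Measure Ω) [IsProbabilityMeasure P]
    (Q : Fin m → Fin k → Bool) (c g : Fin m → ℝ) (p : (Fin k → Bool) → ℝ)
    (hc : ∀ i, c i ∈ Set.Icc (0:ℝ) 1) (hg : ∀ i, g i ∈ Set.Icc (0:ℝ) 1)
    (hQcomp : Complete Q) (hcg : Ncong c g) (hp : ProbVec p) (hdiv : ∀ A, 0 < p A)
    -- the i.i.d. sample from the DINO model; only the responses `R` are observed
    (A : ℕ → Ω → (Fin k → Bool)) (R : ℕ → Ω → (Fin m → Bool))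
    (hmeas : ∀ n, Measurable (fun ω => (A n ω, R n ω)))
    (hindep : iIndepFun (fun n ω => (A n ω, R n ω)) P)
    (hdist : ∀ (n : ℕ) (a : Fin k → Bool) (r : Fin m → Bool),
      P {ω | A n ω = a ∧ R n ω = r} = ENNReal.ofReal (dinoPMF c g Q p a r))
    -- a measurable choice of minimizer of `Q' ↦ S_{c,g}(Q')`
    (Qhat : ℕ → Ω → (Fin m → Fin k → Bool))
    (hQhatMeas : ∀ N, Measurable (Qhat N))
    (hQhatMin : ∀ (N : ℕ) (ω : Ω) (Q' : Fin m → Fin k → Bool),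
      Vobj c g (Qhat N ω) (betaVec (fun r => R r ω) N) ≤
        Vobj c g Q' (betaVec (fun r => R r ω) N)) :
    -- conclusion 1: P(Q̂_N ∼ Q) → 1
    Tendsto (fun N => P {ω | QEquiv Q (Qhat N ω)}) atTop (nhds 1) ∧
    -- conclusion 2: a measurable column permutation of Q̂_N converging to Q exists
    (∃ Qbar : ℕ → Ω → (Fin m → Fin k → Bool),
      (∀ N, Measurable (Qbar N)) ∧
      (∀ N ω, QEquiv (Qhat N ω) (Qbar N ω)) ∧
      Tendsto (fun N => P {ω | Qbar N ω = Q}) atTop (nhds 1)) ∧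
    -- conclusion 3: for any such choice, any measurable minimizing `p̂_N` is consistent
    (∀ Qbar : ℕ → Ω → (Fin m → Fin k → Bool),
      (∀ N, Measurable (Qbar N)) →
      (∀ N ω, QEquiv (Qhat N ω) (Qbar N ω)) →
      Tendsto (fun N => P {ω | Qbar N ω = Q}) atTop (nhds 1) →
      ∀ phat : ℕ → Ω → ((Fin k → Bool) → ℝ),
        (∀ N, Measurable (phat N)) →
        (∀ N ω, ProbVec (phat N ω) ∧ ∀ p', ProbVec p' →
          eNorm (Umat c g (Qbar N ω) *ᵥ phat N ω - betaVec (fun r => R r ω) N) ≤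
            eNorm (Umat c g (Qbar N ω) *ᵥ p' - betaVec (fun r => R r ω) N)) →
        ∀ ε > (0:ℝ),
          Tendsto (fun N => P {ω | ε < eNorm (fun a => phat N ω a - p a)})
            atTop (nhds 0)) := by
  classical
  have hβ := fun r (hr : 0 < r) => tendsto_measure_le_eNorm_sub_betaVec
    (fun n => measurable_snd.comp (hmeas n)) (ae_tendsto_betaVec hc hg hp.1 hmeas hindep hdist) hr
  have hequiv := tendsto_measure_qequiv hcg hQcomp hp hdiv hβ hQhatMin
  let canon : (Fin m → Fin k → Bool) → (Fin m → Fin k → Bool) := fun Q' =>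
    if QEquiv Q Q' then Q else Q'
  refine ⟨hequiv, ⟨fun N ω => canon (Qhat N ω),
    fun N => (measurable_of_countable canon).comp (hQhatMeas N), fun N ω => ?_, ?_⟩,
    fun Qbar hQbarMeas _ hQbar phat _ hphat ε hε =>
      tendsto_measure_lt_eNorm_sub hcg hQcomp hp hβ hQbarMeas hQbar hphat hε⟩
  · dsimp only [canon]
    split_ifs with h
    exacts [h.symm, QEquiv.refl _]
  · exact tendsto_of_tendsto_of_tendsto_of_le_of_le hequiv tendsto_const_nhds
      (fun N => measure_mono fun ω hω => if_pos hω) fun _ => prob_le_one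

end QMatrix
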